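/- arXiv:2504.01720 — 4 statements merged into one kernel-verified Lean document; each statement's English description precedes it below -/
import Mathlib

section
/- Every language accepted by an ε-free IETWSFA under initialized even computation consists only of odd-length strings, and this inclusion into the family of odd-length-string languages is strict. -/
namespace IETW

/-- An input-erasing two-way general finite automaton (IETWGFA). -/
structure GFA (T : Type) : Type 1 where
  Q : Type
  finQ : Finite Q
  start : Q
  accept : Set Q
  /-- Left rules: `(x, q, p)` represents `x q → p`. -/
  ruleL : Set (List T × Q × Q)
  /-- Right rules: `(q, x, p)` represents `q x → p`. -/
  ruleR : Set (Q × List T × Q)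
  finL : ruleL.Finite
  finR : ruleR.Finite

variable {T : Type}

/-- One move, labelled by its direction (`true` = left) and the number of erased symbols. -/
inductive GFA.Step (M : GFA T) :
    List T × M.Q × List T → Bool × ℕ → List T × M.Q × List T → Prop
  | left {u v x : List T} {q p : M.Q} (h : (x, q, p) ∈ M.ruleL) :
      GFA.Step M (u ++ x, q, v) (true, x.length) (u, p, v)
  | right {u v x : List T} {q p : M.Q} (h : (q, x, p) ∈ M.ruleR) :
      GFA.Step M (u, q, x ++ v) (false, x.length) (u, p, v)

/-- A computation along a list of move labels. -/
inductive GFA.Chain (M : GFA T) :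
    List T × M.Q × List T → List (Bool × ℕ) → List T × M.Q × List T → Prop
  | nil (c) : GFA.Chain M c [] c
  | cons {c c' c'' l ls} (h : GFA.Step M c l c') (h' : GFA.Chain M c' ls c'') :
      GFA.Chain M c (l :: ls) c''

/-- `L(M)`. -/
def GFA.lang (M : GFA T) : Set (List T) :=
  {w | ∃ x y ls f, w = x ++ y ∧ f ∈ M.accept ∧ M.Chain (x, M.start, y) ls ([], f, [])}

/-- The moves strictly alternate between left and right. -/
def Alternating (ls : List (Bool × ℕ)) : Prop :=
  ls.Chain' (fun a b => a.1 ≠ b.1)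

/-- An even computation: alternating, of even length, and each odd-indexed move reads
the same number of symbols as the following move. -/
def EvenTrace (ls : List (Bool × ℕ)) : Prop :=
  ls.length % 2 = 0 ∧ Alternating ls ∧
    ∀ i, 2 * i + 1 < ls.length →
      (ls.getD (2 * i) (true, 0)).2 = (ls.getD (2 * i + 1) (true, 0)).2

/-- An initialized even computation: one move followed by an even computation. -/
def InitEvenTrace (ls : List (Bool × ℕ)) : Prop :=
  ∃ l ls', ls = l :: ls' ∧ EvenTrace ls'

/-- `L(M)_alt`. -/
def GFA.langAlt (M : GFA T) : Set (List T) :=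
  {w | ∃ x y ls f, w = x ++ y ∧ f ∈ M.accept ∧ Alternating ls ∧
    M.Chain (x, M.start, y) ls ([], f, [])}

/-- `L(M)_even`. -/
def GFA.langEven (M : GFA T) : Set (List T) :=
  {w | ∃ x y ls f, w = x ++ y ∧ f ∈ M.accept ∧ EvenTrace ls ∧
    M.Chain (x, M.start, y) ls ([], f, [])}

/-- `L(M)_init-even`. -/
def GFA.langInitEven (M : GFA T) : Set (List T) :=
  {w | ∃ x y ls f, w = x ++ y ∧ f ∈ M.accept ∧ InitEvenTrace ls ∧
    M.Chain (x, M.start, y) ls ([], f, [])}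

/-- All rules read at most one symbol (IETWSFA). -/
def GFA.Simple (M : GFA T) : Prop :=
  (∀ r ∈ M.ruleL, r.1.length ≤ 1) ∧ (∀ r ∈ M.ruleR, r.2.1.length ≤ 1)

/-- No ε-rules: every rule reads at least one symbol. -/
def GFA.EpsFree (M : GFA T) : Prop :=
  (∀ r ∈ M.ruleL, r.1 ≠ ([] : List T)) ∧ (∀ r ∈ M.ruleR, r.2.1 ≠ ([] : List T))

/-- A linear grammar: rules `A → x B y` (encoded `(A, x, some (B, y))`)
or `A → x` (encoded `(A, x, none)`). -/
structure LG (T : Type) : Type 1 where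
  N : Type
  finN : Finite N
  start : N
  rules : Set (N × List T × Option (N × List T))
  finR : rules.Finite

/-- One derivation step on sentential forms `u A v`. -/
inductive LG.Der (G : LG T) :
    List T × G.N × List T → List T × G.N × List T → Prop
  | step {u v x y : List T} {A B : G.N} (h : (A, x, some (B, y)) ∈ G.rules) :
      LG.Der G (u, A, v) (u ++ x, B, y ++ v)

/-- `L(G)`. -/
def LG.lang (G : LG T) : Set (List T) :=
  {w | ∃ u A v x, Relation.ReflTransGen G.Der ([], G.start, []) (u, A, v) ∧
    (A, x, none) ∈ G.rules ∧ w = u ++ x ++ v}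

/-- Even linear grammar: `|x| = |y|` in every rule `A → x B y`. -/
def LG.Even (G : LG T) : Prop :=
  ∀ r ∈ G.rules, ∀ B (y : List T), r.2.2 = some (B, y) → r.2.1.length = y.length

/-!
In an ε-free simple automaton every move erases exactly one symbol, so an accepted word is
exactly as long as its computation, and an initialized even computation has odd length.
For strictness take the odd-length language `{a ^ 3 ^ k}`. In an accepting initialized even
computation the states after `1, 3, …, 2|Q| + 1` moves repeat; cutting out the even-length stretch
between two equal ones leaves an initialized even computation (every move reads one symbol, so
the pairing condition is automatic) accepting a word shorter by at most `2|Q|`. Since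
`3 ^ (n + 1) - 3 ^ n > 2n`, no power of three can be that close below `3 ^ (|Q| + 1)`.
-/

theorem Alternating.fst_getElem_add_two_mul {t : List (Bool × ℕ)} (h : Alternating t)
    (i k : ℕ) (hk : i + 2 * k < t.length) : t[i + 2 * k].1 = t[i].1 := by
  induction k with
  | zero => rfl
  | succ k ih =>
    have h₁ := List.isChain_iff_getElem.1 h (i + 2 * k) (by omega)
    have h₂ := List.isChain_iff_getElem.1 h (i + 2 * k + 1) (by omega)
    rw [← ih (by omega)]
    revert h₁ h₂
    simp only [show i + 2 * (k + 1) = i + 2 * k + 1 + 1 by ring]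
    cases t[i + 2 * k].1 <;> cases t[i + 2 * k + 1].1 <;> cases t[i + 2 * k + 1 + 1].1 <;> simp

theorem Alternating.take_append_drop {t : List (Bool × ℕ)} (h : Alternating t) {p q : ℕ}
    (hpq : p ≤ q) (heven : Even (q - p)) :
    Alternating (t.take p ++ t.drop q) := by
  refine List.IsChain.append (h.take p) (h.drop q) fun a ha b hb => ?_
  obtain ⟨k, hk⟩ := heven
  rw [List.getLast?_take] at ha
  rw [List.head?_drop, Option.mem_def, List.getElem?_eq_some_iff] at hb
  obtain ⟨hqlt, rfl⟩ := hb
  split_ifs at ha with hp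
  · simp at ha
  rw [List.getElem?_eq_getElem (by omega), Option.some_or, Option.mem_some_iff] at ha
  subst ha
  have hjunction := List.isChain_iff_getElem.1 h (q - 1) (by omega)
  simp only [Nat.sub_add_cancel (show 1 ≤ q by omega)] at hjunction
  have hparity := h.fst_getElem_add_two_mul (p - 1) k (by omega)
  simp only [show p - 1 + 2 * k = q - 1 by omega] at hparity
  rw [← hparity]
  exact hjunction

theorem evenTrace_of_forall_snd_eq_one {ls : List (Bool × ℕ)} (hlen : ls.length % 2 = 0)
    (halt : Alternating ls) (hone : ∀ l ∈ ls, l.2 = 1) : EvenTrace ls := by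
  refine ⟨hlen, halt, fun i hi => ?_⟩
  rw [List.getD_eq_getElem _ _ (by omega), List.getD_eq_getElem _ _ hi,
    hone _ (List.getElem_mem _), hone _ (List.getElem_mem _)]

namespace GFA

variable {M : GFA T}

theorem Step.length_eq {c c' : List T × M.Q × List T} {l : Bool × ℕ} (h : M.Step c l c') :
    c.1.length + c.2.2.length = l.2 + (c'.1.length + c'.2.2.length) := by
  cases h <;> simp only [List.length_append] <;> omega

theorem Step.snd_eq_one (hS : M.Simple) (hE : M.EpsFree) {c c' : List T × M.Q × List T}
    {l : Bool × ℕ} (h : M.Step c l c') : l.2 = 1 := by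
  cases h with
  | left h => exact le_antisymm (hS.1 _ h) (List.length_pos_iff.2 (hE.1 _ h))
  | right h => exact le_antisymm (hS.2 _ h) (List.length_pos_iff.2 (hE.2 _ h))

theorem Chain.forall_snd_eq_one (hS : M.Simple) (hE : M.EpsFree)
    {c c' : List T × M.Q × List T} {ls : List (Bool × ℕ)} (h : M.Chain c ls c') :
    ∀ l ∈ ls, l.2 = 1 := by
  induction h with
  | nil => simp
  | cons hs _ ih => exact List.forall_mem_cons.2 ⟨hs.snd_eq_one hS hE, ih⟩

theorem Chain.length_eq (hS : M.Simple) (hE : M.EpsFree) {c c' : List T × M.Q × List T}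
    {ls : List (Bool × ℕ)} (h : M.Chain c ls c') :
    c.1.length + c.2.2.length = ls.length + (c'.1.length + c'.2.2.length) := by
  induction h with
  | nil => simp
  | cons hs _ ih =>
    rw [hs.length_eq, hs.snd_eq_one hS hE, ih, List.length_cons]
    omega

theorem Chain.append {c c' c'' : List T × M.Q × List T} {ls ls' : List (Bool × ℕ)}
    (h : M.Chain c ls c') (h' : M.Chain c' ls' c'') : M.Chain c (ls ++ ls') c'' := by
  induction h with
  | nil => exact h'
  | cons hs _ ih => exact .cons hs (ih h')

theorem chain_append_iff {c c'' : List T × M.Q × List T} {ls ls' : List (Bool × ℕ)} :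
    M.Chain c (ls ++ ls') c'' ↔ ∃ c', M.Chain c ls c' ∧ M.Chain c' ls' c'' := by
  refine ⟨fun h => ?_, fun ⟨_, h, h'⟩ => h.append h'⟩
  induction ls generalizing c with
  | nil => exact ⟨c, .nil c, h⟩
  | cons l ls ih =>
    obtain _ | ⟨hs, h⟩ := h
    obtain ⟨c', h, h'⟩ := ih h
    exact ⟨c', .cons hs h, h'⟩

theorem Chain.frame {c c' : List T × M.Q × List T} {ls : List (Bool × ℕ)}
    (h : M.Chain c ls c') (A B : List T) :
    M.Chain (A ++ c.1, c.2.1, c.2.2 ++ B) ls (A ++ c'.1, c'.2.1, c'.2.2 ++ B) := by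
  induction h with
  | nil c => exact .nil _
  | cons hs _ ih =>
    cases hs with
    | @left u v x q p h =>
      exact .cons (by simpa using Step.left (u := A ++ u) (v := v ++ B) h) ih
    | @right u v x q p h =>
      exact .cons (by simpa using Step.right (u := A ++ u) (v := v ++ B) h) ih

theorem Chain.exists_core {x y x' y' : List T} {q q' : M.Q} {ls : List (Bool × ℕ)}
    (h : M.Chain (x, q, y) ls (x', q', y')) :
    ∃ e f, x = x' ++ e ∧ y = f ++ y' ∧ M.Chain (e, q, f) ls ([], q', []) := by
  generalize hc : (x, q, y) = c at h
  generalize hc' : (x', q', y') = c' at h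
  induction h generalizing x q y with
  | nil c =>
    subst hc; cases hc'
    exact ⟨[], [], by simp, by simp, .nil _⟩
  | cons hs _ ih =>
    subst hc
    cases hs with
    | @left u v e₀ q p hr =>
      obtain ⟨e, f, rfl, rfl, h⟩ := ih rfl hc'
      exact ⟨e ++ e₀, f, by simp, rfl, .cons (.left hr) h⟩
    | @right u v f₀ q p hr =>
      obtain ⟨e, f, rfl, rfl, h⟩ := ih rfl hc'
      exact ⟨e, f₀ ++ f, rfl, by simp, .cons (.right hr) h⟩

theorem Chain.splice {c₀ c₁ c₂ c₃ : List T × M.Q × List T} {ls ls' : List (Bool × ℕ)}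
    (h : M.Chain c₀ ls c₁) (h' : M.Chain c₂ ls' c₃) (hq : c₁.2.1 = c₂.2.1) :
    ∃ e f, c₀.1 = c₁.1 ++ e ∧ c₀.2.2 = f ++ c₁.2.2 ∧
      M.Chain (c₂.1 ++ e, c₀.2.1, f ++ c₂.2.2) (ls ++ ls') c₃ := by
  obtain ⟨e, f, he, hf, hcore⟩ := h.exists_core
  have hframed := hcore.frame c₂.1 c₂.2.2
  simp only [List.append_nil, hq] at hframed
  exact ⟨e, f, he, hf, hframed.append h'⟩

theorem odd_length_of_mem_langInitEven (hS : M.Simple) (hE : M.EpsFree) {w : List T}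
    (hw : w ∈ M.langInitEven) : Odd w.length := by
  obtain ⟨x, y, _, _, rfl, -, ⟨l₀, t, rfl, ht⟩, hch⟩ := hw
  have hlen := hch.length_eq hS hE
  simp only [List.length_cons, List.length_nil] at hlen
  rw [Nat.odd_iff, List.length_append]
  have := ht.1
  omega

theorem exists_mem_langInitEven_length_lt (hS : M.Simple) (hE : M.EpsFree) {w : List T}
    (hw : w ∈ M.langInitEven) (hlen : 2 * Nat.card M.Q < w.length) :
    ∃ w' ∈ M.langInitEven,
      w'.length < w.length ∧ w.length ≤ w'.length + 2 * Nat.card M.Q := by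
  obtain ⟨x, y, _, f, rfl, hf, ⟨l₀, t, rfl, ht⟩, hch⟩ := hw
  have hwt : x.length + y.length = t.length + 1 := by simpa using hch.length_eq hS hE
  have hsplit (r : Fin (Nat.card M.Q + 1)) : ∃ c, M.Chain (x, M.start, y)
      ((l₀ :: t).take (2 * r + 1)) c ∧ M.Chain c ((l₀ :: t).drop (2 * r + 1)) ([], f, []) :=
    chain_append_iff.1 (by rwa [List.take_append_drop])
  choose cfg hpre hsuf using hsplit
  have := M.finQ
  have := Fintype.ofFinite M.Q
  obtain ⟨r₁, r₂, hne, hq⟩ := Fintype.exists_ne_map_eq_of_card_lt (fun r => (cfg r).2.1)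
    (by simp [Nat.card_eq_fintype_card])
  wlog hlt : r₁ < r₂ generalizing r₁ r₂
  · exact this r₂ r₁ hne.symm hq.symm (lt_of_le_of_ne (not_lt.1 hlt) hne.symm)
  obtain ⟨e, g, -, -, hcut⟩ := (hpre r₁).splice (hsuf r₂) hq
  simp only [List.take_succ_cons, List.drop_succ_cons, List.cons_append] at hcut
  have hr₂ := r₂.isLt
  have hlt' : (r₁ : ℕ) < r₂ := hlt
  have hcut_len := hcut.length_eq hS hE
  simp only [List.length_append, List.length_cons, List.length_take, List.length_drop,
    List.length_nil] at hcut_len hwt hlen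
  refine ⟨_, ⟨_, _, _, f, rfl, hf, ⟨l₀, _, rfl, evenTrace_of_forall_snd_eq_one ?_
    (ht.2.1.take_append_drop (by omega) ⟨r₂ - r₁, by omega⟩) ?_⟩, hcut⟩, ?_, ?_⟩
  · simp only [List.length_append, List.length_take, List.length_drop]
    have := ht.1
    omega
  · intro l hl
    refine hch.forall_snd_eq_one hS hE l (List.mem_cons_of_mem _ ?_)
    exact (List.mem_append.1 hl).elim List.mem_of_mem_take List.mem_of_mem_drop
  all_goals simp only [List.length_append]; omega

theorem langInitEven_ne_replicate_pow_three (hS : M.Simple) (hE : M.EpsFree) (a : T) :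
    M.langInitEven ≠ {w | ∃ k, w = List.replicate (3 ^ k) a} := by
  intro hM
  set N := Nat.card M.Q
  have hN : N < 3 ^ N := Nat.lt_pow_self (by norm_num)
  have hw : List.replicate (3 ^ (N + 1)) a ∈ M.langInitEven := hM ▸ ⟨N + 1, rfl⟩
  obtain ⟨w', hw', hlt, hle⟩ := exists_mem_langInitEven_length_lt hS hE hw
    (by rw [List.length_replicate, pow_succ]; omega)
  rw [hM] at hw'
  obtain ⟨k, rfl⟩ := hw'
  simp only [List.length_replicate] at hlt hle
  have hk : k < N + 1 := (Nat.pow_lt_pow_iff_right (by norm_num)).1 hlt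
  have h3k : 3 ^ k ≤ 3 ^ N := Nat.pow_le_pow_right (by norm_num) (by omega)
  rw [pow_succ] at hle
  omega

end GFA

theorem epsfree_initeven_family_ssubset_oddLength (T : Type) [Nonempty T] :
    {L : Set (List T) | ∃ M : GFA T, M.Simple ∧ M.EpsFree ∧ M.langInitEven = L} ⊂
      {L : Set (List T) | ∀ w ∈ L, Odd w.length} := by
  obtain ⟨a⟩ := ‹Nonempty T›
  refine ssubset_of_subset_not_superset ?_ fun hsub => ?_
  · rintro L ⟨M, hS, hE, rfl⟩ w hw
    exact M.odd_length_of_mem_langInitEven hS hE hw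
  · have hodd : {w | ∃ k, w = List.replicate (3 ^ k) a} ∈
        {L : Set (List T) | ∀ w ∈ L, Odd w.length} := by
      rintro w ⟨k, rfl⟩
      rw [List.length_replicate]
      exact Odd.pow (by decide)
    obtain ⟨M, hS, hE, hM⟩ := hsub hodd
    exact M.langInitEven_ne_replicate_pow_three hS hE a hM

end IETW
end

section
/- Let M = (Q, Σ, R, s, F) be an ε-free IETWSFA and let A, B ⊆ Σ* be regular. Then the language {uv | usv ⇒* f in M, f ∈ F, u ∈ A, v ∈ B} is accepted by some ε-free IETWSFA, and hence is linear. -/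
namespace IETW

variable {T : Type}

/-- The language `{uv | usv ⇒* f in M, f ∈ F, u ∈ A, v ∈ B}`. -/
def leftRightLang {T : Type} (M : GFA T) (A B : Set (List T)) : Set (List T) :=
  {w | ∃ u v f ls, w = u ++ v ∧ u ∈ A ∧ v ∈ B ∧ f ∈ M.accept ∧
    M.Chain (u, M.start, v) ls ([], f, [])}

/-!
The left part of the input is erased from its right end and the right part from its left end.
So `M` is run in parallel with a DFA for `B` reading the right part forwards and, through a subset
construction, a DFA for `A` read backwards; the product is still ε-free and simple, since its rules
read what the rules of `M` read. Linearity then holds for every such automaton: a linear grammar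
whose nonterminals are its states derives its computations in reverse, one rule per move.
-/

open Set Relation

namespace GFA

variable (M : GFA T)

section Product

variable {σA σB : Type} [Finite σA] [Finite σB] (DA : DFA T σA) (DB : DFA T σB)

/-- In a state `(q, S, b)`, `S` is the set of `DA`-states from which the word erased so far on the
left leads to acceptance, and `b` is the state `DB` reaches on the word erased so far on the
right. -/
def prodDFA : GFA T where
  Q := M.Q × Set σA × σB
  finQ := have := M.finQ; inferInstance
  start := (M.start, DA.accept, DB.start)
  accept := {f | f.1 ∈ M.accept ∧ DA.start ∈ f.2.1 ∧ f.2.2 ∈ DB.accept}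
  ruleL := (fun r : (List T × M.Q × M.Q) × Set σA × σB =>
      (r.1.1, (r.1.2.1, r.2), (r.1.2.2, (DA.evalFrom · r.1.1) ⁻¹' r.2.1, r.2.2))) ''
    (M.ruleL ×ˢ univ)
  ruleR := (fun r : (M.Q × List T × M.Q) × Set σA × σB =>
      ((r.1.1, r.2), r.1.2.1, (r.1.2.2, r.2.1, DB.evalFrom r.2.2 r.1.2.1))) ''
    (M.ruleR ×ˢ univ)
  finL := (M.finL.prod finite_univ).image _
  finR := (M.finR.prod finite_univ).image _

variable {M DA DB}

theorem mem_prodDFA_ruleL {x : List T} {q p : M.Q} {S S' : Set σA} {b b' : σB} :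
    (x, (q, S, b), (p, S', b')) ∈ (M.prodDFA DA DB).ruleL ↔
      (x, q, p) ∈ M.ruleL ∧ S' = (DA.evalFrom · x) ⁻¹' S ∧ b' = b := by
  constructor
  · rintro ⟨⟨⟨x, q, p⟩, S, b⟩, ⟨hr, -⟩, h⟩
    obtain ⟨rfl, ⟨rfl, rfl, rfl⟩, rfl, rfl, rfl⟩ := by simpa only [Prod.mk.injEq] using h
    exact ⟨hr, rfl, rfl⟩
  · rintro ⟨hr, rfl, rfl⟩
    exact ⟨((x, q, p), _, _), ⟨hr, trivial⟩, rfl⟩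

theorem mem_prodDFA_ruleR {x : List T} {q p : M.Q} {S S' : Set σA} {b b' : σB} :
    ((q, S, b), x, (p, S', b')) ∈ (M.prodDFA DA DB).ruleR ↔
      (q, x, p) ∈ M.ruleR ∧ S' = S ∧ b' = DB.evalFrom b x := by
  constructor
  · rintro ⟨⟨⟨q, x, p⟩, S, b⟩, ⟨hr, -⟩, h⟩
    obtain ⟨⟨rfl, rfl, rfl⟩, rfl, rfl, rfl, rfl⟩ := by simpa only [Prod.mk.injEq] using h
    exact ⟨hr, rfl, rfl⟩
  · rintro ⟨hr, rfl, rfl⟩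
    exact ⟨((q, x, p), _, _), ⟨hr, trivial⟩, rfl⟩

theorem Simple.prodDFA (hM : M.Simple) : (M.prodDFA DA DB).Simple :=
  ⟨by rintro _ ⟨⟨r, _⟩, ⟨hr, -⟩, rfl⟩; exact hM.1 r hr,
    by rintro _ ⟨⟨r, _⟩, ⟨hr, -⟩, rfl⟩; exact hM.2 r hr⟩

theorem EpsFree.prodDFA (hM : M.EpsFree) : (M.prodDFA DA DB).EpsFree :=
  ⟨by rintro _ ⟨⟨r, _⟩, ⟨hr, -⟩, rfl⟩; exact hM.1 r hr,
    by rintro _ ⟨⟨r, _⟩, ⟨hr, -⟩, rfl⟩; exact hM.2 r hr⟩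

theorem Chain.prodDFA {c c' : List T × M.Q × List T} {ls} (h : M.Chain c ls c')
    (S : Set σA) (b : σB) :
    ∃ d e, c.1 = c'.1 ++ d ∧ c.2.2 = e ++ c'.2.2 ∧
      (M.prodDFA DA DB).Chain (c.1, (c.2.1, S, b), c.2.2) ls
        (c'.1, (c'.2.1, (DA.evalFrom · d) ⁻¹' S, DB.evalFrom b e), c'.2.2) := by
  induction h generalizing S b with
  | nil c => exact ⟨[], [], by simp, by simp, by simpa [DFA.evalFrom] using Chain.nil _⟩
  | @cons _ _ c' _ _ h _ ih =>
    cases h with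
    | @left u v x q p hr =>
      obtain ⟨d, e, rfl, rfl, hc⟩ := ih ((DA.evalFrom · x) ⁻¹' S) b
      refine ⟨d ++ x, e, by simp, rfl, ?_⟩
      have hr' : (x, (q, S, b), (p, _, b)) ∈ (M.prodDFA DA DB).ruleL :=
        mem_prodDFA_ruleL.mpr ⟨hr, rfl, rfl⟩
      have hstep := Step.left (u := c'.1 ++ d) (v := e ++ c'.2.2) hr'
      simpa [DFA.evalFrom_of_append, preimage_preimage] using hc.cons hstep
    | @right u v x q p hr =>
      obtain ⟨d, e, rfl, rfl, hc⟩ := ih S (DB.evalFrom b x)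
      refine ⟨d, x ++ e, rfl, by simp, ?_⟩
      have hr' : ((q, S, b), x, (p, S, _)) ∈ (M.prodDFA DA DB).ruleR :=
        mem_prodDFA_ruleR.mpr ⟨hr, rfl, rfl⟩
      have hstep := Step.right (u := c'.1 ++ d) (v := e ++ c'.2.2) hr'
      simpa [DFA.evalFrom_of_append, preimage_preimage] using hc.cons hstep

theorem Chain.of_prodDFA {c c' : List T × (M.prodDFA DA DB).Q × List T} {ls}
    (h : (M.prodDFA DA DB).Chain c ls c') :
    M.Chain (c.1, c.2.1.1, c.2.2) ls (c'.1, c'.2.1.1, c'.2.2) ∧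
      ∃ d e, c.1 = c'.1 ++ d ∧ c.2.2 = e ++ c'.2.2 ∧
        c'.2.1.2.1 = (DA.evalFrom · d) ⁻¹' c.2.1.2.1 ∧
          c'.2.1.2.2 = DB.evalFrom c.2.1.2.2 e := by
  induction h with
  | nil c => exact ⟨Chain.nil _, [], [], by simp, by simp, by simp [DFA.evalFrom], rfl⟩
  | cons h _ ih =>
    obtain ⟨hc, d, e, hd, he, hS, hb⟩ := ih
    cases h with
    | @left u v x q p hr =>
      obtain ⟨q, S, b⟩ := q
      obtain ⟨p, S', b'⟩ := p
      obtain ⟨hM, rfl, rfl⟩ := mem_prodDFA_ruleL.mp hr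
      dsimp only at hd
      refine ⟨hc.cons (Step.left hM), d ++ x, e, by simp [hd], he, ?_, hb⟩
      simp [hS, DFA.evalFrom_of_append, preimage_preimage]
    | @right u v x q p hr =>
      obtain ⟨q, S, b⟩ := q
      obtain ⟨p, S', b'⟩ := p
      obtain ⟨hM, rfl, rfl⟩ := mem_prodDFA_ruleR.mp hr
      dsimp only at he
      refine ⟨hc.cons (Step.right hM), d, x ++ e, hd, by simp [he], hS, ?_⟩
      simp [hb, DFA.evalFrom_of_append]

theorem prodDFA_lang : (M.prodDFA DA DB).lang = leftRightLang M DA.accepts DB.accepts := by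
  ext w
  constructor
  · rintro ⟨x, y, ls, ⟨f, S, b⟩, rfl, ⟨hf, hx, hy⟩, h⟩
    obtain ⟨hM, d, e, hd, he, rfl, rfl⟩ := h.of_prodDFA
    obtain rfl : x = d := by simpa using hd
    obtain rfl : y = e := by simpa using he
    exact ⟨x, y, f, ls, rfl, hx, hy, hf, hM⟩
  · rintro ⟨x, y, f, ls, rfl, hx, hy, hf, h⟩
    obtain ⟨d, e, hd, he, hc⟩ := h.prodDFA (DA := DA) (DB := DB) DA.accept DB.start
    obtain rfl : x = d := by simpa using hd
    obtain rfl : y = e := by simpa using he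
    refine ⟨x, y, ls, _, rfl, ⟨hf, ?_, ?_⟩, hc⟩
    exacts [hx, hy]

end Product

def Moves (c c' : List T × M.Q × List T) : Prop := ∃ l, M.Step c l c'

theorem exists_chain_iff_reflTransGen {c c' : List T × M.Q × List T} :
    (∃ ls, M.Chain c ls c') ↔ ReflTransGen M.Moves c c' := by
  constructor
  · rintro ⟨ls, h⟩
    induction h with
    | nil => exact .refl
    | cons h _ ih => exact .head ⟨_, h⟩ ih
  · intro h
    induction h using ReflTransGen.head_induction_on with
    | refl => exact ⟨[], .nil _⟩
    | head h _ ih =>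
      obtain ⟨l, h⟩ := h
      obtain ⟨ls, ih⟩ := ih
      exact ⟨l :: ls, .cons h ih⟩

/-- Each rule undoes one move of `M`; the fresh start symbol `none` guesses the final state. -/
def toLG : LG T where
  N := Option M.Q
  finN := have := M.finQ; inferInstance
  start := none
  rules :=
    (fun f => (none, [], some (some f, []))) '' M.accept ∪
    (fun r : List T × M.Q × M.Q => (some r.2.2, r.1, some (some r.2.1, []))) '' M.ruleL ∪
    (fun r : M.Q × List T × M.Q => (some r.2.2, [], some (some r.1, r.2.1))) '' M.ruleR ∪
    {(some M.start, [], none)}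
  finR := by
    have := M.finQ
    exact (((toFinite _).image _).union (M.finL.image _)).union (M.finR.image _)
      |>.union (finite_singleton _)

variable {M}

theorem toLG_der_none_iff {c} :
    M.toLG.Der ([], none, []) c ↔ ∃ f ∈ M.accept, c = ([], some f, []) := by
  constructor
  · rintro ⟨h⟩
    rcases h with ((⟨f, hf, h⟩ | ⟨_, _, h⟩) | ⟨_, _, h⟩) | h <;> cases h
    exact ⟨f, hf, rfl⟩
  · rintro ⟨f, hf, rfl⟩
    exact LG.Der.step (u := []) (v := []) (G := M.toLG)
      (Or.inl (Or.inl (Or.inl ⟨f, hf, rfl⟩)))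

theorem exists_moves_of_toLG_der {u v : List T} {p : M.Q} {c} (h : M.toLG.Der (u, some p, v) c) :
    ∃ c', c = (c'.1, some c'.2.1, c'.2.2) ∧ M.Moves c' (u, p, v) := by
  obtain ⟨((⟨_, _, h⟩ | ⟨⟨x, q, p⟩, hr, h⟩) | ⟨⟨q, x, p⟩, hr, h⟩) | h⟩ := h <;>
    cases h
  · exact ⟨(u ++ x, q, v), rfl, _, .left hr⟩
  · exact ⟨(u, q, x ++ v), by simp only [List.append_nil]; rfl, _, .right hr⟩

theorem Moves.toLG_der {c c'} (h : M.Moves c c') :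
    M.toLG.Der (c'.1, some c'.2.1, c'.2.2) (c.1, some c.2.1, c.2.2) := by
  obtain ⟨_, ⟨hr⟩ | ⟨hr⟩⟩ := h
  · exact LG.Der.step (G := M.toLG) (Or.inl (Or.inl (Or.inr ⟨_, hr, rfl⟩)))
  · simpa using LG.Der.step (u := _) (v := _) (G := M.toLG) (Or.inl (Or.inr ⟨_, hr, rfl⟩))

theorem reflTransGen_toLG_der_iff {u v : List T} {p : M.Q} {c} :
    ReflTransGen M.toLG.Der (u, some p, v) c ↔
      ∃ c', c = (c'.1, some c'.2.1, c'.2.2) ∧ ReflTransGen M.Moves c' (u, p, v) := by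
  constructor
  · intro h
    induction h with
    | refl => exact ⟨(u, p, v), rfl, .refl⟩
    | tail _ h ih =>
      obtain ⟨c₁, rfl, h₁⟩ := ih
      obtain ⟨c₂, rfl, h₂⟩ := exists_moves_of_toLG_der h
      exact ⟨c₂, rfl, .head h₂ h₁⟩
  · rintro ⟨c', rfl, h⟩
    exact ReflTransGen.lift (fun c : List T × M.Q × List T => (c.1, some c.2.1, c.2.2))
      (fun _ _ h => Moves.toLG_der h) _ _ (reflTransGen_swap.mpr h)

theorem toLG_lang : M.toLG.lang = M.lang := by
  ext w
  constructor
  · rintro ⟨u, A, v, x, hder, hterm, rfl⟩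
    obtain ⟨rfl, rfl⟩ : A = some M.start ∧ x = [] := by
      rcases hterm with ((⟨_, _, h⟩ | ⟨_, _, h⟩) | ⟨_, _, h⟩) | h <;> cases h
      exact ⟨rfl, rfl⟩
    rcases hder.cases_head with h | ⟨c, hc, hder⟩
    · cases h
    obtain ⟨f, hf, rfl⟩ := toLG_der_none_iff.mp hc
    obtain ⟨⟨u, q, v⟩, h, hM⟩ := reflTransGen_toLG_der_iff.mp hder
    cases h
    obtain ⟨ls, hch⟩ := M.exists_chain_iff_reflTransGen.mpr hM
    exact ⟨u, v, ls, f, by simp, hf, hch⟩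
  · rintro ⟨x, y, ls, f, rfl, hf, h⟩
    have hM := M.exists_chain_iff_reflTransGen.mp ⟨ls, h⟩
    refine ⟨x, some M.start, y, [], .head (toLG_der_none_iff.mpr ⟨f, hf, rfl⟩)
      (reflTransGen_toLG_der_iff.mpr ⟨(x, M.start, y), rfl, hM⟩), Or.inr rfl, by simp⟩

end GFA

theorem input_AB_regular_linear {T : Type} (M : GFA T) (hS : M.Simple) (hE : M.EpsFree)
    (A B : Set (List T)) (hA : Language.IsRegular (A : Language T))
    (hB : Language.IsRegular (B : Language T)) :
    (∃ M' : GFA T, M'.Simple ∧ M'.EpsFree ∧ M'.lang = leftRightLang M A B) ∧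
      (∃ G : LG T, G.lang = leftRightLang M A B) := by
  obtain ⟨σA, _, DA, rfl⟩ := hA
  obtain ⟨σB, _, DB, rfl⟩ := hB
  have hlang : (M.prodDFA DA DB).lang = _ := GFA.prodDFA_lang
  exact ⟨⟨M.prodDFA DA DB, hS.prodDFA, hE.prodDFA, hlang⟩,
    ⟨(M.prodDFA DA DB).toLG, by rw [GFA.toLG_lang, hlang]⟩⟩

end IETW
end

section
/- Let M = (Q, Σ, R, s, F) be an ε-free IETWSFA and let A, B, C ⊆ Σ* be regular. Then the language {v | usvw ⇒* f in M, f ∈ F, u ∈ A, v ∈ B, w ∈ C} is regular. -/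
namespace IETW

variable {T : Type}

/-- The language `{v | usvw ⇒* f in M, f ∈ F, u ∈ A, v ∈ B, w ∈ C}`. -/
def midLang {T : Type} (M : GFA T) (A B C : Set (List T)) : Set (List T) :=
  {v | v ∈ B ∧ ∃ u w f ls, u ∈ A ∧ w ∈ C ∧ f ∈ M.accept ∧
    M.Chain (u, M.start, v ++ w) ls ([], f, [])}

end IETW

/-!
Every move of an ε-free IETWSFA reads exactly one symbol, so an accepting computation on
`u s v w` interleaves reading `u` backwards with reading `v w` forwards. Hence the language is
`B ∩ R / C`, where `R` is the set of right tapes accepted together with some left tape in `A`.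
Right quotients preserve regularity, and `R` is regular by Myhill–Nerode: after reading `x` from
the right tape, the future of the computation depends only on the current state and on the left
quotient of `A` by the still unerased part of the left tape.
-/

namespace Language

variable {α : Type*}

def rightQuotient (L : Language α) (C : Set (List α)) : Language α :=
  {v | ∃ w ∈ C, v ++ w ∈ L}

theorem leftQuotient_rightQuotient (L : Language α) (C : Set (List α)) (x : List α) :
    (L.rightQuotient C).leftQuotient x = (L.leftQuotient x).rightQuotient C := by
  ext v
  change (∃ w ∈ C, (x ++ v) ++ w ∈ L) ↔ ∃ w ∈ C, x ++ (v ++ w) ∈ L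
  simp only [List.append_assoc]

theorem IsRegular.rightQuotient {L : Language α} (hL : L.IsRegular) (C : Set (List α)) :
    (L.rightQuotient C).IsRegular := by
  refine .of_finite_range_leftQuotient <|
    (hL.finite_range_leftQuotient.image (Language.rightQuotient · C)).subset ?_
  rintro _ ⟨x, rfl⟩
  exact ⟨L.leftQuotient x, ⟨x, rfl⟩, (leftQuotient_rightQuotient L C x).symm⟩

end Language

namespace IETW

variable {T : Type}

/-- `M.Erase q u z p`: started on the tape `u q z`, the machine erases all of `u z` by moves
that each read one symbol, and halts in state `p`. -/
inductive GFA.Erase (M : GFA T) : M.Q → List T → List T → M.Q → Prop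
  | refl (q : M.Q) : M.Erase q [] [] q
  | left {q p r : M.Q} {a : T} {u z : List T} (h : ([a], q, p) ∈ M.ruleL)
      (h' : M.Erase p u z r) : M.Erase q (u ++ [a]) z r
  | right {q p r : M.Q} {a : T} {u z : List T} (h : (q, [a], p) ∈ M.ruleR)
      (h' : M.Erase p u z r) : M.Erase q u (a :: z) r

namespace GFA

variable {M : GFA T}

theorem Erase.exists_chain {q p : M.Q} {u z : List T} (h : M.Erase q u z p) :
    ∃ ls, M.Chain (u, q, z) ls ([], p, []) := by
  induction h with
  | refl q => exact ⟨[], .nil _⟩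
  | left hr _ ih =>
    obtain ⟨ls, hc⟩ := ih
    exact ⟨_, .cons (.left hr) hc⟩
  | right hr _ ih =>
    obtain ⟨ls, hc⟩ := ih
    exact ⟨_, .cons (.right hr) hc⟩

theorem Chain.erase (hS : M.Simple) (hE : M.EpsFree) {c c' : List T × M.Q × List T}
    {ls : List (Bool × ℕ)} (h : M.Chain c ls c') (h₁ : c'.1 = []) (h₂ : c'.2.2 = []) :
    M.Erase c.2.1 c.1 c.2.2 c'.2.1 := by
  have singleton {x : List T} (h₁ : x.length ≤ 1) (h₀ : x ≠ []) : ∃ a, x = [a] :=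
    List.length_eq_one_iff.mp (le_antisymm h₁ (List.length_pos_iff.mpr h₀))
  induction h with
  | nil c =>
    obtain ⟨u, q, z⟩ := c
    obtain rfl : u = [] := h₁
    obtain rfl : z = [] := h₂
    exact .refl q
  | cons hs _ ih =>
    cases hs with
    | left hr =>
      obtain ⟨a, rfl⟩ := singleton (hS.1 _ hr) (hE.1 _ hr)
      exact .left hr (ih h₁ h₂)
    | right hr =>
      obtain ⟨a, rfl⟩ := singleton (hS.2 _ hr) (hE.2 _ hr)
      exact .right hr (ih h₁ h₂)

/-- The computation is split after the last move that reads from `x`. -/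
theorem erase_append_iff {q r : M.Q} {u x z : List T} :
    M.Erase q u (x ++ z) r ↔ ∃ u₁ u₂ p, u = u₁ ++ u₂ ∧ M.Erase q u₂ x p ∧ M.Erase p u₁ z r := by
  constructor
  · intro h
    generalize hxz : x ++ z = y at h
    induction h generalizing x with
    | refl q =>
      obtain ⟨rfl, rfl⟩ := List.append_eq_nil_iff.mp hxz
      exact ⟨[], [], q, rfl, .refl q, .refl q⟩
    | left hr _ ih =>
      obtain ⟨u₁, u₂, p, rfl, h₂, h₁⟩ := ih hxz
      exact ⟨u₁, u₂ ++ [_], p, List.append_assoc .., .left hr h₂, h₁⟩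
    | @right q _ _ a u y hr h ih =>
      cases x with
      | nil =>
        obtain rfl : z = a :: y := hxz
        exact ⟨u, [], q, (List.append_nil u).symm, .refl q, .right hr h⟩
      | cons b x =>
        simp only [List.cons_append, List.cons.injEq] at hxz
        obtain ⟨rfl, hxz⟩ := hxz
        obtain ⟨u₁, u₂, p, rfl, h₂, h₁⟩ := ih hxz
        exact ⟨u₁, u₂, p, rfl, .right hr h₂, h₁⟩
  · rintro ⟨u₁, u₂, p, rfl, h₂, h₁⟩
    induction h₂ with
    | refl q => simpa using h₁
    | left hr _ ih => simpa [← List.append_assoc] using Erase.left hr (ih h₁)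
    | right hr _ ih => exact .right hr (ih h₁)

def rightLang (M : GFA T) (A : Language T) : Language T :=
  {z | ∃ u ∈ A, ∃ f ∈ M.accept, M.Erase M.start u z f}

theorem isRegular_rightLang {A : Language T} (hA : A.IsRegular) : (M.rightLang A).IsRegular := by
  have := M.finQ
  let profile (x : List T) : Set (M.Q × Language T) :=
    {c | c.2 ∈ Set.range A.leftQuotient ∧ ∃ u₂ ∈ c.2, M.Erase M.start u₂ x c.1}
  let quotientOf (S : Set (M.Q × Language T)) : Language T :=
    {z | ∃ p u₁, (p, A.leftQuotient u₁) ∈ S ∧ ∃ f ∈ M.accept, M.Erase p u₁ z f}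
  have hquot (x : List T) : (M.rightLang A).leftQuotient x = quotientOf (profile x) := by
    ext z
    constructor
    · rintro ⟨_, hu, f, hf, h⟩
      obtain ⟨u₁, u₂, p, rfl, h₂, h₁⟩ := erase_append_iff.mp h
      exact ⟨p, u₁, ⟨⟨u₁, rfl⟩, u₂, hu, h₂⟩, f, hf, h₁⟩
    · rintro ⟨p, u₁, ⟨-, u₂, hu, h₂⟩, f, hf, h₁⟩
      exact ⟨_, hu, f, hf, erase_append_iff.mpr ⟨u₁, u₂, p, rfl, h₂, h₁⟩⟩
  refine .of_finite_range_leftQuotient <|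
    ((Set.finite_univ.prod hA.finite_range_leftQuotient).finite_subsets.image quotientOf).subset ?_
  rintro _ ⟨x, rfl⟩
  exact ⟨profile x, fun c hc => ⟨trivial, hc.1⟩, (hquot x).symm⟩

end GFA

theorem midLang_eq {M : GFA T} (hS : M.Simple) (hE : M.EpsFree) (A B C : Set (List T)) :
    (midLang M A B C : Language T) = (B : Language T) ⊓ (M.rightLang A).rightQuotient C := by
  ext v
  constructor
  · rintro ⟨hv, u, w, f, ls, hu, hw, hf, hc⟩
    exact ⟨hv, w, hw, u, hu, f, hf, hc.erase hS hE rfl rfl⟩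
  · rintro ⟨hv, w, hw, u, hu, f, hf, h⟩
    obtain ⟨ls, hc⟩ := h.exists_chain
    exact ⟨hv, u, w, f, ls, hu, hw, hf, hc⟩

theorem input_ABC_regular_mid_regular_general {T : Type} (M : GFA T) (hS : M.Simple)
    (hE : M.EpsFree) (A B C : Set (List T)) (hA : Language.IsRegular (A : Language T))
    (hB : Language.IsRegular (B : Language T)) :
    Language.IsRegular (midLang M A B C : Language T) := by
  rw [midLang_eq hS hE]
  exact hB.inf ((GFA.isRegular_rightLang hA).rightQuotient C)

theorem input_ABC_regular_mid_regular {T : Type} (M : GFA T) (hS : M.Simple)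
    (hE : M.EpsFree) (A B C : Set (List T)) (hA : Language.IsRegular (A : Language T))
    (hB : Language.IsRegular (B : Language T)) (hC : Language.IsRegular (C : Language T)) :
    Language.IsRegular (midLang M A B C : Language T) :=
  input_ABC_regular_mid_regular_general M hS hE A B C hA hB

end IETW
end

section
/- For every one-way finite automaton M there exists an IETWGFA M' with L(M') = L(M); consequently, the regular languages are strictly contained in the family of languages accepted by IETWGFAs. -/
namespace IETW

variable {T : Type}

/-- A one-way finite automaton (with ε-moves). -/
structure FA (T : Type) : Type 1 where
  Q : Type
  finQ : Finite Q
  start : Q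
  accept : Set Q
  rules : Set (Q × Option T × Q)
  finR : rules.Finite

inductive FA.Step {T : Type} (M : FA T) : M.Q × List T → M.Q × List T → Prop
  | eps {q p : M.Q} {w : List T} (h : (q, none, p) ∈ M.rules) :
      FA.Step M (q, w) (p, w)
  | sym {q p : M.Q} {a : T} {w : List T} (h : (q, some a, p) ∈ M.rules) :
      FA.Step M (q, a :: w) (p, w)

def FA.lang {T : Type} (M : FA T) : Set (List T) :=
  {w | ∃ f, f ∈ M.accept ∧ Relation.ReflTransGen M.Step (M.start, w) (f, [])}


/-! An FA is an IETWGFA that uses only right rules, starting with the whole input to its right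
and erasing it from the left. Conversely, `{aⁿbⁿ}` is accepted by the two-state IETWGFA that
alternately erases a `b` on its right and an `a` on its left, but by no FA: an FA reading the
prefix `aⁿ` of `aⁿbⁿ` must, for two values `m ≠ n`, pass through the same state after the
prefix, and then also accepts `aᵐbⁿ`. -/

open Relation List

def GFA.Moves_s19 (M : GFA T) (c c' : List T × M.Q × List T) : Prop :=
  ∃ l, M.Step c l c'

theorem GFA.exists_chain_iff_reflTransGen_s19 {M : GFA T} {c c' : List T × M.Q × List T} :
    (∃ ls, M.Chain c ls c') ↔ ReflTransGen M.Moves_s19 c c' := by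
  constructor
  · rintro ⟨ls, h⟩
    induction h with
    | nil => exact .refl
    | cons hs _ ih => exact .head ⟨_, hs⟩ ih
  · intro h
    induction h using ReflTransGen.head_induction_on with
    | refl => exact ⟨[], .nil _⟩
    | head hs _ ih =>
      obtain ⟨l, hs⟩ := hs
      obtain ⟨ls, h⟩ := ih
      exact ⟨l :: ls, .cons hs h⟩

theorem GFA.mem_lang_iff {M : GFA T} {w : List T} :
    w ∈ M.lang ↔ ∃ x y f, w = x ++ y ∧ f ∈ M.accept ∧
      ReflTransGen M.Moves_s19 (x, M.start, y) ([], f, []) := by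
  simp only [GFA.lang, ← GFA.exists_chain_iff_reflTransGen_s19, Set.mem_ofPred_eq]
  constructor
  · rintro ⟨x, y, ls, f, hw, hf, h⟩
    exact ⟨x, y, f, hw, hf, ls, h⟩
  · rintro ⟨x, y, f, hw, hf, ls, h⟩
    exact ⟨x, y, ls, f, hw, hf, h⟩

def FA.toGFA (M : FA T) : GFA T where
  Q := M.Q
  finQ := M.finQ
  start := M.start
  accept := M.accept
  ruleL := ∅
  ruleR := (fun r => (r.1, r.2.1.toList, r.2.2)) '' M.rules
  finL := Set.finite_empty
  finR := M.finR.image _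

theorem FA.toGFA_moves_iff {M : FA T} {c c' : List T × M.toGFA.Q × List T} :
    M.toGFA.Moves_s19 c c' ↔ c'.1 = c.1 ∧ M.Step c.2 c'.2 := by
  constructor
  · rintro ⟨_, hs⟩
    cases hs with
    | left h => exact absurd h (Set.notMem_empty _)
    | right h =>
      obtain ⟨⟨q, o, p⟩, hr, he⟩ := h
      simp only at he
      obtain ⟨rfl, rfl, rfl⟩ := he
      cases o with
      | none => exact ⟨rfl, .eps hr⟩
      | some a => exact ⟨rfl, .sym hr⟩
  · obtain ⟨u, q, w⟩ := c
    obtain ⟨u', p, w'⟩ := c'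
    rintro ⟨rfl, hs⟩
    cases hs with
    | eps h => exact ⟨_, GFA.Step.right (M := M.toGFA) (x := []) ⟨_, h, rfl⟩⟩
    | sym h => exact ⟨_, GFA.Step.right (M := M.toGFA) (x := [_]) ⟨_, h, rfl⟩⟩

theorem FA.toGFA_reflTransGen_iff {M : FA T} {c c' : List T × M.toGFA.Q × List T} :
    ReflTransGen M.toGFA.Moves_s19 c c' ↔ c'.1 = c.1 ∧ ReflTransGen M.Step c.2 c'.2 := by
  constructor
  · intro h
    induction h with
    | refl => exact ⟨rfl, .refl⟩
    | tail _ hs ih =>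
      obtain ⟨hu, hs⟩ := FA.toGFA_moves_iff.mp hs
      exact ⟨hu.trans ih.1, ih.2.tail hs⟩
  · obtain ⟨u, q, w⟩ := c
    obtain ⟨u', p, w'⟩ := c'
    rintro ⟨rfl, h⟩
    exact ReflTransGen.lift (fun d : M.Q × List T => (u', d))
      (fun _ _ hs => FA.toGFA_moves_iff.mpr ⟨rfl, hs⟩) _ _ h

theorem FA.toGFA_lang (M : FA T) : M.toGFA.lang = M.lang := by
  ext w
  rw [GFA.mem_lang_iff]
  constructor
  · rintro ⟨x, y, f, rfl, hf, h⟩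
    obtain ⟨rfl, h⟩ := FA.toGFA_reflTransGen_iff.mp h
    exact ⟨f, hf, h⟩
  · rintro ⟨f, hf, h⟩
    exact ⟨[], w, f, rfl, hf, FA.toGFA_reflTransGen_iff.mpr ⟨rfl, h⟩⟩

def anbn (a b : T) : Set (List T) :=
  {w | ∃ n, w = replicate n a ++ replicate n b}

def anbnGFA (a b : T) : GFA T where
  Q := Bool
  finQ := inferInstance
  start := true
  accept := {true}
  ruleL := {([a], false, true)}
  ruleR := {(true, [b], false)}
  finL := Set.finite_singleton _
  finR := Set.finite_singleton _

theorem anbnGFA_reaches_accept (a b : T) (n : ℕ) :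
    ReflTransGen (anbnGFA a b).Moves_s19 (replicate n a, true, replicate n b) ([], true, []) := by
  induction n with
  | zero => exact .refl
  | succ n ih =>
    have erase_b := GFA.Step.right (M := anbnGFA a b) (u := replicate (n + 1) a)
      (v := replicate n b) (x := [b]) (q := true) (p := false) rfl
    have erase_a := GFA.Step.left (M := anbnGFA a b) (u := replicate n a)
      (v := replicate n b) (x := [a]) (q := false) (p := true) rfl
    rw [← replicate_succ'] at erase_a
    exact .head ⟨_, erase_b⟩ (.head ⟨_, erase_a⟩ ih)

theorem anbnGFA_shape_of_reaches_accept {a b : T} {c : List T × (anbnGFA a b).Q × List T}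
    (h : ReflTransGen (anbnGFA a b).Moves_s19 c ([], true, [])) :
    (c.2.1 = true → ∃ n, c.1 = replicate n a ∧ c.2.2 = replicate n b) ∧
    (c.2.1 = false → ∃ n, c.1 = replicate (n + 1) a ∧ c.2.2 = replicate n b) := by
  induction h using ReflTransGen.head_induction_on with
  | refl => exact ⟨fun _ => ⟨0, rfl, rfl⟩, nofun⟩
  | head hs _ ih =>
    obtain ⟨_, hs⟩ := hs
    cases hs with
    | left h =>
      cases h
      obtain ⟨n, hu, hv⟩ := ih.1 rfl
      dsimp only at hu hv ⊢
      exact ⟨nofun, fun _ => ⟨n, by simp [hu, replicate_succ'], hv⟩⟩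
    | right h =>
      cases h
      obtain ⟨n, hu, hv⟩ := ih.2 rfl
      dsimp only at hu hv ⊢
      exact ⟨fun _ => ⟨n + 1, hu, by simp [hv, replicate_succ]⟩, nofun⟩

theorem anbnGFA_lang (a b : T) : (anbnGFA a b).lang = anbn a b := by
  ext w
  rw [GFA.mem_lang_iff]
  constructor
  · rintro ⟨x, y, f, rfl, rfl, h⟩
    obtain ⟨n, rfl, rfl⟩ := (anbnGFA_shape_of_reaches_accept h).1 rfl
    exact ⟨n, rfl⟩
  · rintro ⟨n, rfl⟩
    exact ⟨_, _, true, rfl, rfl, anbnGFA_reaches_accept a b n⟩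

def FA.Reads (M : FA T) (q : M.Q) (u : List T) (p : M.Q) : Prop :=
  ∀ z, ReflTransGen M.Step (q, u ++ z) (p, z)

theorem FA.exists_reads_of_accepts_append {M : FA T} {q f : M.Q} {u v : List T}
    (h : ReflTransGen M.Step (q, u ++ v) (f, [])) :
    ∃ p, M.Reads q u p ∧ ReflTransGen M.Step (p, v) (f, []) := by
  generalize hc : (q, u ++ v) = c at h
  induction h using ReflTransGen.head_induction_on generalizing q u with
  | refl =>
    simp only [Prod.mk.injEq, append_eq_nil_iff] at hc
    obtain ⟨rfl, rfl, rfl⟩ := hc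
    exact ⟨q, fun _ => .refl, .refl⟩
  | head hs ht ih =>
    subst hc
    cases u with
    | nil => exact ⟨q, fun _ => .refl, .head hs ht⟩
    | cons a u =>
      cases hs with
      | eps h =>
        obtain ⟨p, hp, hv⟩ := ih rfl
        exact ⟨p, fun z => .head (.eps h) (hp z), hv⟩
      | sym h =>
        obtain ⟨p, hp, hv⟩ := ih rfl
        exact ⟨p, fun z => .head (.sym h) (hp z), hv⟩

theorem FA.lang_ne_anbn (M : FA T) {a b : T} (hab : a ≠ b) : M.lang ≠ anbn a b := by
  classical
  intro hM
  have split (n : ℕ) : ∃ p, M.Reads M.start (replicate n a) p ∧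
      ∃ f ∈ M.accept, ReflTransGen M.Step (p, replicate n b) (f, []) := by
    have hmem : replicate n a ++ replicate n b ∈ M.lang := hM ▸ ⟨n, rfl⟩
    obtain ⟨f, hf, h⟩ := hmem
    obtain ⟨p, hp, hv⟩ := FA.exists_reads_of_accepts_append h
    exact ⟨p, hp, f, hf, hv⟩
  choose p hp hacc using split
  have := M.finQ
  obtain ⟨m, n, hmn, hpmn⟩ := Finite.exists_ne_map_eq_of_infinite p
  obtain ⟨f, hf, hn⟩ := hacc n
  have hmem : replicate m a ++ replicate n b ∈ anbn a b :=
    hM ▸ ⟨f, hf, (hp m _).trans (hpmn ▸ hn)⟩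
  obtain ⟨k, hk⟩ := hmem
  have count_a := congrArg (count a) hk
  have count_b := congrArg (count b) hk
  simp only [count_append, count_replicate_self, count_replicate, beq_iff_eq, hab, hab.symm,
    ↓reduceIte, add_zero, zero_add] at count_a count_b
  exact hmn (count_a.trans count_b.symm)

theorem fa_to_ietwgfa_and_strict {T : Type} (a b : T) (hab : a ≠ b) :
    (∀ M : FA T, ∃ M' : GFA T, M'.lang = M.lang) ∧
    {L : Set (List T) | ∃ M : FA T, M.lang = L} ⊂
      {L : Set (List T) | ∃ M' : GFA T, M'.lang = L} := by
  have simulate (M : FA T) : ∃ M' : GFA T, M'.lang = M.lang := ⟨M.toGFA, M.toGFA_lang⟩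
  refine ⟨simulate, ?_, ?_⟩
  · rintro L ⟨M, rfl⟩
    exact simulate M
  · intro hsub
    obtain ⟨M, hM⟩ := hsub ⟨anbnGFA a b, anbnGFA_lang a b⟩
    exact M.lang_ne_anbn hab hM

end IETW
end
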